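/- arXiv:2112.08065 — 3 statements merged into one kernel-verified Lean document; each statement's English description precedes it below -/
import Mathlib

section
/- For every integer n ≥ 1, let d(n+1) denote the greatest common divisor of the binomial coefficients C(n+1,1), C(n+1,2), …, C(n+1,n). Then d(n+1) = p if n+1 = p^k for some prime p and some integer k ≥ 1, and d(n+1) = 1 otherwise. -/
/-- If a prime `q` divides `C(n+1, i)` for all `1 ≤ i ≤ n`, then `n+1` is a power of `q`.
We prove the key step: `q` does not divide `C(n+1, q^a)` where `a = v_q(n+1)` unless
`n+1 = q^a`, via Lucas's theorem. -/
private lemma aux_not_dvd_choose (q n a : ℕ) (hq : q.Prime) (ha : a = (n + 1).factorization q)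
    (hm : ¬ q ∣ (n + 1) / q ^ a) : ¬ q ∣ (n + 1).choose (q ^ a) := by
  haveI : Fact q.Prime := ⟨hq⟩
  intro hdvd
  set m := (n + 1) / q ^ a with hmdef
  have h := Choose.choose_modEq_choose_mul_prod_range_choose (p := q) (n := n + 1) (k := q ^ a) a
  have hnat : (n + 1).choose (q ^ a) ≡ ((n + 1) / q ^ a).choose (q ^ a / q ^ a) *
      ∏ i ∈ Finset.range a, ((n + 1) / q ^ i % q).choose (q ^ a / q ^ i % q) [MOD q] := by
    rw [← Int.natCast_modEq_iff]
    exact_mod_cast h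
  have hprod : ∀ i ∈ Finset.range a, (q ^ a / q ^ i % q : ℕ) = 0 := by
    intro i hi
    rw [Finset.mem_range] at hi
    rw [Nat.pow_div hi.le hq.pos]
    obtain ⟨c, hc⟩ := dvd_pow_self q (show a - i ≠ 0 by omega)
    rw [hc, Nat.mul_mod_right]
  have hdiv : q ^ a / q ^ a = 1 := Nat.div_self (pow_pos hq.pos a)
  rw [Finset.prod_congr rfl (fun i hi => by rw [hprod i hi])] at hnat
  simp only [Nat.choose_zero_right, Finset.prod_const_one, mul_one, hdiv,
    Nat.choose_one_right] at hnat
  have hm0 : m ≡ 0 [MOD q] := (hnat.symm.trans (Nat.modEq_zero_iff_dvd.mpr hdvd))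
  exact hm (Nat.modEq_zero_iff_dvd.mp hm0)

/-- Kummer's theorem on the gcd of a row of binomial coefficients:
`d(n+1) = gcd(C(n+1,1), …, C(n+1,n))` equals `p` if `n+1` is a power `p^k` (`k ≥ 1`) of a
prime `p`, and equals `1` otherwise. -/
theorem statement0 (n : ℕ) (hn : 1 ≤ n) :
    (∀ p k : ℕ, p.Prime → 1 ≤ k → n + 1 = p ^ k →
      (Finset.Icc 1 n).gcd (fun i => (n + 1).choose i) = p) ∧
    ((¬ ∃ p k : ℕ, p.Prime ∧ 1 ≤ k ∧ n + 1 = p ^ k) →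
      (Finset.Icc 1 n).gcd (fun i => (n + 1).choose i) = 1) := by
  have h1mem : (1 : ℕ) ∈ Finset.Icc 1 n := by simp [hn]
  have hgdvd : (Finset.Icc 1 n).gcd (fun i => (n + 1).choose i) ∣ n + 1 := by
    have := Finset.gcd_dvd (f := fun i => (n + 1).choose i) h1mem
    simpa using this
  constructor
  · intro p k hp hk hnk
    set g := (Finset.Icc 1 n).gcd (fun i => (n + 1).choose i) with hgdef
    -- p divides every entry
    have hpg : p ∣ g := by
      apply Finset.dvd_gcd
      intro i hi
      rw [Finset.mem_Icc] at hi
      rw [hnk]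
      refine Nat.Prime.dvd_choose_pow hp (by omega) ?_
      intro hcon
      omega
    -- g divides C(p^k, p^(k-1)) which has p-multiplicity exactly 1
    have hlt : p ^ (k - 1) < p ^ k := Nat.pow_lt_pow_right hp.one_lt (by omega)
    have hmem2 : p ^ (k - 1) ∈ Finset.Icc 1 n := by
      rw [Finset.mem_Icc]
      exact ⟨Nat.one_le_pow _ _ hp.pos, by omega⟩
    have hgC : g ∣ (n + 1).choose (p ^ (k - 1)) :=
      Finset.gcd_dvd (f := fun i => (n + 1).choose i) hmem2
    rw [hnk] at hgC
    have hmul : emultiplicity p ((p ^ k).choose (p ^ (k - 1))) = (1 : ℕ) := by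
      rw [Nat.Prime.emultiplicity_choose_prime_pow hp hlt.le (pow_ne_zero _ hp.pos.ne'),
        multiplicity_pow_self_of_prime hp.prime]
      congr 1
      omega
    have hnot : ¬ p ^ 2 ∣ (p ^ k).choose (p ^ (k - 1)) := by
      rw [← emultiplicity_lt_iff_not_dvd, hmul]
      exact_mod_cast Nat.one_lt_two
    have hgp : g ∣ p ^ k := by rw [← hnk]; exact hgdvd
    obtain ⟨j, hj, hgj⟩ := (Nat.dvd_prime_pow hp).mp hgp
    have hj1 : j = 1 := by
      by_contra hjne
      rcases Nat.lt_or_ge j 1 with h0 | h1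
      · have : j = 0 := by omega
        rw [this, pow_zero] at hgj
        rw [hgj] at hpg
        exact hp.ne_one (Nat.dvd_one.mp hpg)
      · have h2 : 2 ≤ j := by omega
        exact hnot ((pow_dvd_pow p h2).trans (hgj ▸ hgC))
    rw [hgj, hj1, pow_one]
  · intro hne
    by_contra hg
    obtain ⟨q, hq, hqg⟩ := Nat.exists_prime_and_dvd hg
    set g := (Finset.Icc 1 n).gcd (fun i => (n + 1).choose i) with hgdef
    have hqn : q ∣ n + 1 := hqg.trans hgdvd
    set a := (n + 1).factorization q with hadef
    set m := (n + 1) / q ^ a with hmdef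
    have hma : q ^ a * m = n + 1 := Nat.ordProj_mul_ordCompl_eq_self (n + 1) q
    have hqm : ¬ q ∣ m := Nat.not_dvd_ordCompl hq (by omega)
    have ha : 1 ≤ a := hq.factorization_pos_of_dvd (by omega) hqn
    have hm1 : m ≠ 1 := by
      intro h1
      exact hne ⟨q, a, hq, ha, by rw [← hma, h1, mul_one]⟩
    have hm0 : m ≠ 0 := by
      intro h0
      rw [h0, mul_zero] at hma
      omega
    have hqa1 : 1 ≤ q ^ a := Nat.one_le_pow _ _ hq.pos
    have hm2 : 2 ≤ m := by
      rcases m with _ | _ | m'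
      · exact absurd rfl hm0
      · exact absurd rfl hm1
      · omega
    have h2qa : q ^ a * 2 ≤ q ^ a * m := Nat.mul_le_mul_left _ hm2
    rw [hma] at h2qa
    have hqan : q ^ a ≤ n := by omega
    have hqC : q ∣ (n + 1).choose (q ^ a) :=
      hqg.trans (Finset.gcd_dvd (f := fun i => (n + 1).choose i)
        (by rw [Finset.mem_Icc]; exact ⟨hqa1, hqan⟩))
    exact aux_not_dvd_choose q n a hq hadef hqm hqC
end

section
/- Let R be a commutative ring and let A(u), B(u) ∈ R[[u]] be power series with A(0) = B(0) = 1. Then there exists a unique power series F(u,v) ∈ R[[u,v]] such that F(u,v)·(u·B(v) − v·B(u)) = u²·A(v) − v²·A(u). Moreover this F satisfies F(u,0) = u, F(0,v) = v, F(u,v) = F(v,u), and F(u,v) = u + v + Σ_{i,j≥1} a_{i,j} u^i v^j for some coefficients a_{i,j} ∈ R. -/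
noncomputable section

/-- A one-variable power series `f`, viewed as a multivariable power series
in the single variable `i`:  `f(x_i)`. -/
def onVar {R : Type*} [CommRing R] {σ : Type*} [DecidableEq σ] (i : σ) (f : PowerSeries R) :
    MvPowerSeries σ R :=
  fun d => if d = Finsupp.single i (d i) then PowerSeries.coeff (d i) f else 0

/-- The exponent vector of the monomial `u^i v^j`. -/
def ee (i j : ℕ) : Fin 2 →₀ ℕ := Finsupp.single 0 i + Finsupp.single 1 j

/-!
Writing `f(u) = f(v) + (u - v)·δf(u,v)` with the divided difference `δf`, the denominator
`u·B(v) − v·B(u)` factors as `(u − v)·(B(v) − v·δB)`, whose second factor has constant term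
`B(0) = 1` and is a unit; likewise the numerator is `(u − v)·((u + v)·A(v) − v²·δA)`.
Since `u − v` is a nonzerodivisor (its lexicographically leading coefficient is `−1`), the equation
has exactly one solution. Swapping `u` and `v` negates both sides, so by uniqueness the solution is
symmetric; setting `v = 0` leaves `F(u,0)·u = u²`, so `F(u,0) = u`, and `F(0,v) = v` by symmetry.
-/

open MvPowerSeries Finsupp
open scoped nonZeroDivisors

theorem existsUnique_mul_eq_mul {R : Type*} [CommRing R] {d c : R} (hd : d ∈ R⁰) (hc : IsUnit c)
    (m : R) : ∃! x, x * (d * c) = d * m := by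
  have hdc : d * c ∈ R⁰ := mul_mem hd hc.mem_nonZeroDivisors
  have hsol : m * ↑hc.unit⁻¹ * (d * c) = d * m := by
    rw [show m * ↑hc.unit⁻¹ * (d * c) = d * m * (c * ↑hc.unit⁻¹) by ring, hc.mul_val_inv, mul_one]
  exact ⟨_, hsol, fun y hy => (mul_cancel_right_mem_nonZeroDivisors hdc).mp (hy.trans hsol.symm)⟩

namespace MvPowerSeries

section Semiring

variable {σ R : Type*} [Semiring R]

theorem eq_zero_of_mul_eq_zero_of_lexOrder [LinearOrder σ] [WellFoundedGT σ]
    {φ ψ : MvPowerSeries σ R} {p : σ →₀ ℕ} (hφ : lexOrder φ = toLex p)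
    (hp : IsLeftRegular (coeff p φ)) (h : φ * ψ = 0) : ψ = 0 := by
  by_contra hψ
  obtain ⟨q, hq⟩ := exists_finsupp_eq_lexOrder_of_ne_zero hψ
  have hpq := coeff_mul_of_add_lexOrder hφ hq
  rw [h, map_zero, ← mul_zero (coeff p φ)] at hpq
  exact coeff_ne_zero_of_lexOrder hq.symm (hp hpq).symm

theorem coeff_add_single_X_mul (s : σ) (d : σ →₀ ℕ) (g : MvPowerSeries σ R) :
    coeff (d + single s 1) (X s * g) = coeff d g := by
  classical
  rw [X, coeff_monomial_mul, if_pos le_add_self, one_mul, add_tsub_cancel_right]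

theorem coeff_X_mul_of_apply_eq_zero {s : σ} {d : σ →₀ ℕ} (hd : d s = 0)
    (g : MvPowerSeries σ R) : coeff d (X s * g) = 0 := by
  classical
  rw [X, coeff_monomial_mul, if_neg (by simp [single_le_iff, hd])]

end Semiring

section CommSemiring

variable {σ R : Type*} [CommSemiring R]

theorem killCompl_punit_X_self (i : σ) :
    killCompl (Function.Embedding.punit i) (X i : MvPowerSeries σ R) = PowerSeries.X :=
  killCompl_X PUnit.unit

theorem killCompl_punit_X_of_ne {i j : σ} (hij : i ≠ j) :
    killCompl (Function.Embedding.punit i) (X j : MvPowerSeries σ R) = 0 :=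
  killCompl_X_eq_zero (by rintro ⟨_, h⟩; exact hij h)

end CommSemiring

section CommRing

variable {R : Type*} [CommRing R]

theorem lexOrder_X_zero_sub_X_one [Nontrivial R] :
    lexOrder (X 0 - X 1 : MvPowerSeries (Fin 2) R) = toLex (single (1 : Fin 2) 1) := by
  refine le_antisymm
    (lexOrder_le_of_coeff_ne_zero (by simp [coeff_X, Finsupp.single_left_inj])) ?_
  rw [le_lexOrder_iff]
  intro d hd
  obtain rfl : d = 0 := by
    obtain ⟨i, hlt, hi⟩ := Finsupp.Lex.lt_iff.mp (WithTop.coe_lt_coe.mp hd)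
    ext k
    fin_cases i <;> fin_cases k <;> simp_all
  simp

theorem X_zero_sub_X_one_mem_nonZeroDivisors :
    (X 0 - X 1 : MvPowerSeries (Fin 2) R) ∈ (MvPowerSeries (Fin 2) R)⁰ := by
  rcases subsingleton_or_nontrivial R with hR | hR
  · exact mem_nonZeroDivisors_iff_left.mpr fun ψ _ => ext fun _ => Subsingleton.elim _ _
  rw [mem_nonZeroDivisors_iff_left]
  exact fun ψ => eq_zero_of_mul_eq_zero_of_lexOrder lexOrder_X_zero_sub_X_one
    (by simpa [coeff_X, Finsupp.single_left_inj] using (isUnit_neg_one (α := R)).isRegular.left)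

end CommRing

end MvPowerSeries

section onVar

variable {σ R : Type*} [CommRing R] [DecidableEq σ]

theorem coeff_onVar (i : σ) (f : PowerSeries R) (d : σ →₀ ℕ) :
    coeff d (onVar i f) = if d = single i (d i) then PowerSeries.coeff (d i) f else 0 := rfl

theorem onVar_eq_rename (i : σ) (f : PowerSeries R) :
    onVar i f = rename (Function.Embedding.punit i) f := by
  ext d
  rw [coeff_onVar]
  split_ifs with hd
  · obtain ⟨n, rfl⟩ : ∃ n, d = single i n := ⟨_, hd⟩
    have h := coeff_embDomain_rename (R := R) (Function.Embedding.punit i) f (single PUnit.unit n)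
    rw [embDomain_single] at h
    rw [single_eq_same]
    exact h.symm
  · refine (coeff_rename_eq_zero _ _ ?_).symm
    rintro ⟨x, rfl⟩
    rw [Finsupp.unique_single x, mapDomain_single] at hd
    change ¬ single i (x default) = single i (single i (x default) i) at hd
    rw [single_eq_same] at hd
    exact hd rfl

theorem rename_onVar {τ : Type*} [DecidableEq τ] (e : σ → τ) [Filter.TendstoCofinite e] (i : σ)
    (f : PowerSeries R) : rename e (onVar i f) = onVar (e i) f := by
  rw [onVar_eq_rename, onVar_eq_rename, rename_rename]
  rfl

theorem constantCoeff_onVar (i : σ) (f : PowerSeries R) :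
    constantCoeff (onVar i f) = PowerSeries.constantCoeff f := by
  rw [onVar_eq_rename, constantCoeff_rename]
  rfl

theorem killCompl_onVar_self (i : σ) (f : PowerSeries R) :
    killCompl (Function.Embedding.punit i) (onVar i f) = f := by
  rw [onVar_eq_rename, killCompl_rename_app]

theorem killCompl_onVar_of_ne {i j : σ} (hij : i ≠ j) (f : PowerSeries R) :
    killCompl (Function.Embedding.punit i) (onVar j f) =
      PowerSeries.C (PowerSeries.constantCoeff f) := by
  conv_lhs => rw [onVar_eq_rename, PowerSeries.eq_shift_mul_X_add_const f]
  rw [map_add, map_add, map_mul, map_mul]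
  change _ * killCompl _ (rename _ (X PUnit.unit)) + killCompl _ (rename _ (C _)) = _
  rw [rename_X, rename_C, killCompl_C, killCompl_X_eq_zero, mul_zero, zero_add]
  · rfl
  · rintro ⟨_, h⟩
    exact hij h

end onVar

namespace BuchstaberSeries

variable {R : Type*} [CommRing R]

@[simp] theorem ee_apply_zero (i j : ℕ) : ee i j 0 = i := by simp [ee]

@[simp] theorem ee_apply_one (i j : ℕ) : ee i j 1 = j := by simp [ee]

theorem eq_ee (d : Fin 2 →₀ ℕ) : d = ee (d 0) (d 1) := by
  ext k; fin_cases k <;> simp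

theorem ee_succ_left (i j : ℕ) : ee (i + 1) j = ee i j + single 0 1 := by
  ext k; fin_cases k <;> simp

theorem ee_succ_right (i j : ℕ) : ee i (j + 1) = ee i j + single 1 1 := by
  ext k; fin_cases k <;> simp

/-- The divided difference `(f(u) - f(v)) / (u - v)`, read off from
`(uⁿ - vⁿ) / (u - v) = ∑_{i+j=n-1} uⁱvʲ`. -/
def divDiff (f : PowerSeries R) : MvPowerSeries (Fin 2) R :=
  fun d => PowerSeries.coeff (d 0 + d 1 + 1) f

theorem coeff_ee_divDiff (f : PowerSeries R) (i j : ℕ) :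
    coeff (ee i j) (divDiff f) = PowerSeries.coeff (i + j + 1) f := by
  change PowerSeries.coeff (ee i j 0 + ee i j 1 + 1) f = _
  simp

theorem coeff_ee_onVar_zero (f : PowerSeries R) (i j : ℕ) :
    coeff (ee i j) (onVar 0 f) = if j = 0 then PowerSeries.coeff i f else 0 := by
  rcases j with _ | j <;> simp [coeff_onVar, ee]

theorem coeff_ee_onVar_one (f : PowerSeries R) (i j : ℕ) :
    coeff (ee i j) (onVar 1 f) = if i = 0 then PowerSeries.coeff j f else 0 := by
  rcases i with _ | i <;> simp [coeff_onVar, ee]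

theorem coeff_ee_succ_X_zero_mul (g : MvPowerSeries (Fin 2) R) (i j : ℕ) :
    coeff (ee (i + 1) j) (X 0 * g) = coeff (ee i j) g := by
  rw [ee_succ_left, coeff_add_single_X_mul]

theorem coeff_ee_X_one_mul_succ (g : MvPowerSeries (Fin 2) R) (i j : ℕ) :
    coeff (ee i (j + 1)) (X 1 * g) = coeff (ee i j) g := by
  rw [ee_succ_right, coeff_add_single_X_mul]

theorem coeff_ee_zero_X_zero_mul (g : MvPowerSeries (Fin 2) R) (j : ℕ) :
    coeff (ee 0 j) (X 0 * g) = 0 :=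
  coeff_X_mul_of_apply_eq_zero (ee_apply_zero 0 j) g

theorem coeff_ee_X_one_mul_zero (g : MvPowerSeries (Fin 2) R) (i : ℕ) :
    coeff (ee i 0) (X 1 * g) = 0 :=
  coeff_X_mul_of_apply_eq_zero (ee_apply_one i 0) g

theorem X_zero_sub_X_one_mul_divDiff (f : PowerSeries R) :
    (X 0 - X 1) * divDiff f = onVar 0 f - onVar 1 f := by
  ext d
  rw [eq_ee d]
  rcases d 0 with _ | i <;> rcases d 1 with _ | j <;>
    simp [sub_mul, coeff_ee_divDiff, coeff_ee_onVar_zero, coeff_ee_onVar_one,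
      coeff_ee_succ_X_zero_mul, coeff_ee_X_one_mul_succ, coeff_ee_zero_X_zero_mul,
      coeff_ee_X_one_mul_zero]
  rw [add_right_comm i, add_assoc (i + 1), sub_self]

theorem X_mul_onVar_sub_eq (f : PowerSeries R) :
    X 0 * onVar 1 f - X 1 * onVar 0 f = (X 0 - X 1) * (onVar 1 f - X 1 * divDiff f) := by
  linear_combination (X 1 : MvPowerSeries (Fin 2) R) * X_zero_sub_X_one_mul_divDiff f

theorem X_sq_mul_onVar_sub_eq (f : PowerSeries R) :
    X 0 ^ 2 * onVar 1 f - X 1 ^ 2 * onVar 0 f =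
      (X 0 - X 1) * ((X 0 + X 1) * onVar 1 f - X 1 ^ 2 * divDiff f) := by
  linear_combination (X 1 : MvPowerSeries (Fin 2) R) ^ 2 * X_zero_sub_X_one_mul_divDiff f

theorem isUnit_onVar_one_sub_X_one_mul_divDiff {f : PowerSeries R}
    (hf : IsUnit (PowerSeries.constantCoeff f)) : IsUnit (onVar 1 f - X 1 * divDiff f) := by
  simpa [isUnit_iff_constantCoeff, constantCoeff_onVar] using hf

theorem rename_swap_X_pow_mul_onVar_sub (n : ℕ) (f : PowerSeries R) :
    rename (Equiv.swap (0 : Fin 2) 1) (X 0 ^ n * onVar 1 f - X 1 ^ n * onVar 0 f) =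
      -(X 0 ^ n * onVar 1 f - X 1 ^ n * onVar 0 f) := by
  simp only [map_sub, map_mul, map_pow, rename_X, rename_onVar, Equiv.swap_apply_left,
    Equiv.swap_apply_right]
  ring

theorem coeff_ee_rename_swap (F : MvPowerSeries (Fin 2) R) (i j : ℕ) :
    coeff (ee i j) (rename (Equiv.swap (0 : Fin 2) 1) F) = coeff (ee j i) F := by
  have h := coeff_embDomain_rename (R := R) (Equiv.swap (0 : Fin 2) 1).toEmbedding F (ee j i)
  rw [show embDomain (Equiv.swap (0 : Fin 2) 1).toEmbedding (ee j i) = ee i j by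
    simp [ee, embDomain_add, embDomain_single, add_comm]] at h
  exact h

theorem coeff_ee_zero_right (F : MvPowerSeries (Fin 2) R) (i : ℕ) :
    coeff (ee i 0) F = PowerSeries.coeff i (killCompl (Function.Embedding.punit 0) F) := by
  rw [PowerSeries.coeff, coeff_killCompl, embDomain_single]
  simp only [ee, single_zero, add_zero]
  rfl

theorem rename_swap_mul_eq {A B : PowerSeries R} {F : MvPowerSeries (Fin 2) R}
    (hF : F * (X 0 * onVar 1 B - X 1 * onVar 0 B) = X 0 ^ 2 * onVar 1 A - X 1 ^ 2 * onVar 0 A) :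
    rename (Equiv.swap (0 : Fin 2) 1) F * (X 0 * onVar 1 B - X 1 * onVar 0 B) =
      X 0 ^ 2 * onVar 1 A - X 1 ^ 2 * onVar 0 A := by
  have hswap := congrArg (rename (Equiv.swap (0 : Fin 2) 1)) hF
  have hden := rename_swap_X_pow_mul_onVar_sub 1 B
  simp only [pow_one] at hden
  rwa [map_mul, hden, rename_swap_X_pow_mul_onVar_sub, mul_neg, neg_inj] at hswap

theorem killCompl_punit_zero_eq_X {A B : PowerSeries R} (hA : PowerSeries.constantCoeff A = 1)
    (hB : PowerSeries.constantCoeff B = 1) {F : MvPowerSeries (Fin 2) R}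
    (hF : F * (X 0 * onVar 1 B - X 1 * onVar 0 B) = X 0 ^ 2 * onVar 1 A - X 1 ^ 2 * onVar 0 A) :
    killCompl (Function.Embedding.punit 0 : Unit ↪ Fin 2) F = PowerSeries.X := by
  have h := congrArg (killCompl (Function.Embedding.punit 0 : Unit ↪ Fin 2)) hF
  simp only [map_mul, map_sub, map_pow, killCompl_punit_X_self,
    killCompl_punit_X_of_ne zero_ne_one, killCompl_onVar_self, killCompl_onVar_of_ne zero_ne_one,
    hA, hB, map_one, mul_one, zero_mul, sub_zero, zero_pow two_ne_zero] at h
  rw [mul_comm, sq] at h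
  exact PowerSeries.X_mul_cancel h

end BuchstaberSeries

open BuchstaberSeries

/-- For power series `A`, `B` with `A(0) = B(0) = 1` there is a unique power series
`F(u,v)` with `F(u,v)·(u·B(v) − v·B(u)) = u²·A(v) − v²·A(u)`; moreover `F(u,0) = u`,
`F(0,v) = v`, `F(u,v) = F(v,u)`, i.e. `F` has the form `u + v + Σ_{i,j≥1} a_{i,j}u^iv^j`. -/
theorem statement1 {R : Type*} [CommRing R] (A B : PowerSeries R)
    (hA : PowerSeries.constantCoeff A = 1) (hB : PowerSeries.constantCoeff B = 1) :
    (∃! F : MvPowerSeries (Fin 2) R,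
      F * (MvPowerSeries.X 0 * onVar 1 B - MvPowerSeries.X 1 * onVar 0 B) =
        (MvPowerSeries.X 0) ^ 2 * onVar 1 A - (MvPowerSeries.X 1) ^ 2 * onVar 0 A) ∧
    (∀ F : MvPowerSeries (Fin 2) R,
      F * (MvPowerSeries.X 0 * onVar 1 B - MvPowerSeries.X 1 * onVar 0 B) =
        (MvPowerSeries.X 0) ^ 2 * onVar 1 A - (MvPowerSeries.X 1) ^ 2 * onVar 0 A →
      -- `F(u,0) = u`:
      (∀ i : ℕ, MvPowerSeries.coeff (ee i 0) F = if i = 1 then 1 else 0) ∧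
      -- `F(0,v) = v`:
      (∀ j : ℕ, MvPowerSeries.coeff (ee 0 j) F = if j = 1 then 1 else 0) ∧
      -- `F(u,v) = F(v,u)`:
      (∀ i j : ℕ, MvPowerSeries.coeff (ee i j) F = MvPowerSeries.coeff (ee j i) F)) := by
  have hex : ∃! F : MvPowerSeries (Fin 2) R,
      F * (X 0 * onVar 1 B - X 1 * onVar 0 B) = X 0 ^ 2 * onVar 1 A - X 1 ^ 2 * onVar 0 A := by
    rw [X_mul_onVar_sub_eq, X_sq_mul_onVar_sub_eq]
    refine existsUnique_mul_eq_mul ?_ ?_ _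
    · exact X_zero_sub_X_one_mem_nonZeroDivisors
    · exact isUnit_onVar_one_sub_X_one_mul_divDiff (by rw [hB]; exact isUnit_one)
  refine ⟨hex, fun F hF => ?_⟩
  have hsymm : ∀ i j, coeff (ee i j) F = coeff (ee j i) F := fun i j => by
    rw [← coeff_ee_rename_swap, hex.unique (rename_swap_mul_eq hF) hF]
  have hright : ∀ i, coeff (ee i 0) F = if i = 1 then 1 else 0 := fun i => by
    rw [coeff_ee_zero_right, killCompl_punit_zero_eq_X hA hB hF, PowerSeries.coeff_X]
  exact ⟨hright, fun j => by rw [hsymm, hright], hsymm⟩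

end
end

section
/- Let ℤ[μ] = ℤ[μ1, μ2, μ3, μ4, μ6] be a polynomial ring in five variables. Then there exists a unique formal power series s(u) ∈ ℤ[μ][[u]] with zero constant term satisfying the equation s = u³ + μ1·u·s + μ2·u²·s + μ3·s² + μ4·u·s² + μ6·s³. Moreover s(u) = u³ + μ1 u⁴ + (μ2 + μ1²)u⁵ + (μ3 + 2μ1μ2 + μ1³)u⁶ + … ; in particular the coefficients of u, u², u⁴, u⁵, u⁶ are 0, 0, μ1, μ2 + μ1², μ3 + 2μ1μ2 + μ1³ and the coefficient of u³ is 1. -/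
/-!
The map `F s = u³ + μ₁us + μ₂u²s + μ₃s² + μ₄us² + μ₆s³` preserves the ideal `(u)` and contracts
it `u`-adically: `F s - F t = (s - t) · G(s, t)` with `u ∣ G(s, t)` when `u ∣ s` and `u ∣ t`.
So the iterates `Fⁿ(0)` stabilise coefficientwise to a fixed point, which is the only one in `(u)`,
and it is congruent modulo `u^N` to every `p ∈ (u)` with `u^N ∣ F p - p`. The listed coefficients
are those of `p = u³ + μ₁u⁴ + (μ₂ + μ₁²)u⁵ + (μ₃ + 2μ₁μ₂ + μ₁³)u⁶`, for which `u⁷ ∣ F p - p`.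
-/

noncomputable section

/-- The polynomial ring `ℤ[μ₁, μ₂, μ₃, μ₄, μ₆]`. -/
abbrev Rmu : Type := MvPolynomial (Fin 5) ℤ

def mu1 : Rmu := MvPolynomial.X 0
def mu2 : Rmu := MvPolynomial.X 1
def mu3 : Rmu := MvPolynomial.X 2
def mu4 : Rmu := MvPolynomial.X 3
def mu6 : Rmu := MvPolynomial.X 4

def tateEq (s : PowerSeries Rmu) : Prop :=
  s = PowerSeries.X ^ 3 + PowerSeries.C mu1 * PowerSeries.X * s
    + PowerSeries.C mu2 * PowerSeries.X ^ 2 * s + PowerSeries.C mu3 * s ^ 2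
    + PowerSeries.C mu4 * PowerSeries.X * s ^ 2 + PowerSeries.C mu6 * s ^ 3

namespace PowerSeries

variable {R : Type*} [CommRing R]

theorem eq_of_forall_X_pow_dvd_sub {a b : R⟦X⟧} (h : ∀ n, X ^ n ∣ a - b) : a = b := by
  rw [← sub_eq_zero]
  ext n
  simpa using X_pow_dvd_iff.mp (h (n + 1)) n n.lt_succ_self

structure IsXAdicContraction (F : R⟦X⟧ → R⟦X⟧) : Prop where
  X_dvd_apply {a : R⟦X⟧} : X ∣ a → X ∣ F a
  X_pow_dvd_apply_sub {a b : R⟦X⟧} {n : ℕ} :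
    X ∣ a → X ∣ b → X ^ n ∣ a - b → X ^ (n + 1) ∣ F a - F b

def iterateLimit (F : R⟦X⟧ → R⟦X⟧) : R⟦X⟧ :=
  mk fun n ↦ coeff n (F^[n + 1] 0)

namespace IsXAdicContraction

variable {F : R⟦X⟧ → R⟦X⟧} (hF : IsXAdicContraction F)
include hF

theorem X_dvd_iterate {a : R⟦X⟧} (ha : X ∣ a) (n : ℕ) : X ∣ F^[n] a := by
  induction n with
  | zero => exact ha
  | succ n ih => rw [Function.iterate_succ_apply']; exact hF.X_dvd_apply ih

theorem X_pow_dvd_iterate_sub {a b : R⟦X⟧} (ha : X ∣ a) (hb : X ∣ b) (n : ℕ) :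
    X ^ n ∣ F^[n] a - F^[n] b := by
  induction n with
  | zero => simp
  | succ n ih =>
    simp only [Function.iterate_succ_apply']
    exact hF.X_pow_dvd_apply_sub (hF.X_dvd_iterate ha n) (hF.X_dvd_iterate hb n) ih

theorem coeff_iterate_zero {m n : ℕ} (h : m < n) :
    coeff m (F^[n] 0) = coeff m (F^[m + 1] 0) := by
  obtain ⟨k, rfl⟩ := Nat.exists_eq_add_of_le h
  have hdvd := hF.X_pow_dvd_iterate_sub (hF.X_dvd_iterate (dvd_zero X) k) (dvd_zero X) (m + 1)
  rw [Function.iterate_add_apply, ← sub_eq_zero, ← map_sub]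
  exact X_pow_dvd_iff.mp hdvd m m.lt_succ_self

theorem X_pow_dvd_iterateLimit_sub (n : ℕ) : X ^ n ∣ iterateLimit F - F^[n] 0 :=
  X_pow_dvd_iff.mpr fun m hm ↦ by
    rw [map_sub, iterateLimit, coeff_mk, hF.coeff_iterate_zero hm, sub_self]

theorem X_dvd_iterateLimit : X ∣ iterateLimit F := by
  have h1 : X ∣ iterateLimit F - F 0 := by simpa using hF.X_pow_dvd_iterateLimit_sub 1
  simpa using h1.add (hF.X_dvd_apply (dvd_zero X))

theorem apply_iterateLimit : F (iterateLimit F) = iterateLimit F := by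
  refine (eq_of_forall_X_pow_dvd_sub fun n ↦ ?_).symm
  have hstep : X ^ (n + 1) ∣ F (F^[n] 0) - F (iterateLimit F) :=
    hF.X_pow_dvd_apply_sub (hF.X_dvd_iterate (dvd_zero X) n) hF.X_dvd_iterateLimit
      (by simpa using (hF.X_pow_dvd_iterateLimit_sub n).neg_right)
  have hlim := hF.X_pow_dvd_iterateLimit_sub (n + 1)
  rw [Function.iterate_succ_apply'] at hlim
  exact (pow_dvd_pow X n.le_succ).trans (by simpa using hlim.add hstep)

theorem X_pow_dvd_sub_of_apply_eq {s p : R⟦X⟧} (hs : X ∣ s) (hp : X ∣ p) (hfix : F s = s)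
    {N : ℕ} (hN : X ^ N ∣ F p - p) : X ^ N ∣ s - p := by
  suffices ∀ k ≤ N, X ^ k ∣ s - p from this N le_rfl
  intro k hk
  induction k with
  | zero => simp
  | succ k ih =>
    have hdiff : s - p = (F s - F p) + (F p - p) := by rw [hfix]; ring
    rw [hdiff]
    exact (hF.X_pow_dvd_apply_sub hs hp (ih (by omega))).add ((pow_dvd_pow X hk).trans hN)

theorem existsUnique_apply_eq : ∃! s : R⟦X⟧, X ∣ s ∧ F s = s :=
  ⟨iterateLimit F, ⟨hF.X_dvd_iterateLimit, hF.apply_iterateLimit⟩,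
    fun t ⟨ht, htfix⟩ ↦ eq_of_forall_X_pow_dvd_sub fun _ ↦
      hF.X_pow_dvd_sub_of_apply_eq ht hF.X_dvd_iterateLimit htfix
        (by rw [hF.apply_iterateLimit, sub_self]; exact dvd_zero _)⟩

end IsXAdicContraction

def tateMap (a₁ a₂ a₃ a₄ a₆ : R) (s : R⟦X⟧) : R⟦X⟧ :=
  X ^ 3 + C a₁ * X * s + C a₂ * X ^ 2 * s + C a₃ * s ^ 2 + C a₄ * X * s ^ 2 + C a₆ * s ^ 3

def tateSeriesTrunc (a₁ a₂ a₃ : R) : R⟦X⟧ :=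
  X ^ 3 + C a₁ * X ^ 4 + C (a₂ + a₁ ^ 2) * X ^ 5 + C (a₃ + 2 * a₁ * a₂ + a₁ ^ 3) * X ^ 6

section Tate

variable (a₁ a₂ a₃ a₄ a₆ : R)

theorem isXAdicContraction_tateMap : IsXAdicContraction (tateMap a₁ a₂ a₃ a₄ a₆) where
  X_dvd_apply := by
    rintro _ ⟨s, rfl⟩
    exact ⟨X ^ 2 + C a₁ * X * s + C a₂ * X ^ 2 * s + C a₃ * X * s ^ 2 + C a₄ * X ^ 2 * s ^ 2
      + C a₆ * X ^ 2 * s ^ 3, by simp only [tateMap]; ring⟩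
  X_pow_dvd_apply_sub := by
    rintro _ _ n ⟨s, rfl⟩ ⟨t, rfl⟩ ⟨d, hd⟩
    set g := C a₁ + C a₂ * X + C a₃ * (s + t) + C a₄ * X * (s + t)
      + C a₆ * X * (s ^ 2 + s * t + t ^ 2)
    refine ⟨d * g, ?_⟩
    simp only [tateMap, g]
    linear_combination X * g * hd

theorem X_dvd_tateSeriesTrunc : X ∣ tateSeriesTrunc a₁ a₂ a₃ :=
  ⟨X ^ 2 + C a₁ * X ^ 3 + C (a₂ + a₁ ^ 2) * X ^ 4 + C (a₃ + 2 * a₁ * a₂ + a₁ ^ 3) * X ^ 5,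
    by simp only [tateSeriesTrunc]; ring⟩

theorem X_pow_seven_dvd_tateMap_tateSeriesTrunc_sub :
    X ^ 7 ∣ tateMap a₁ a₂ a₃ a₄ a₆ (tateSeriesTrunc a₁ a₂ a₃) - tateSeriesTrunc a₁ a₂ a₃ := by
  set c₅ : R⟦X⟧ := C a₂ + C a₁ ^ 2
  set c₆ : R⟦X⟧ := C a₃ + 2 * C a₁ * C a₂ + C a₁ ^ 3
  set r : R⟦X⟧ := C a₁ + c₅ * X + c₆ * X ^ 2
  set q : R⟦X⟧ := 1 + X * r
  -- writing the truncation as `X³q`, the terms of `F (X³q) - X³q` below `X⁷` cancel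
  refine ⟨C a₁ * c₆ + C a₂ * (c₅ + c₆ * X) + C a₃ * r * (q + 1) + C a₄ * q ^ 2
    + C a₆ * X ^ 2 * q ^ 3, ?_⟩
  simp only [tateMap, tateSeriesTrunc, q, r, c₅, c₆, map_add, map_mul, map_pow, map_ofNat]
  ring

theorem coeff_tateSeriesTrunc :
    coeff 1 (tateSeriesTrunc a₁ a₂ a₃) = 0 ∧ coeff 2 (tateSeriesTrunc a₁ a₂ a₃) = 0 ∧
    coeff 3 (tateSeriesTrunc a₁ a₂ a₃) = 1 ∧ coeff 4 (tateSeriesTrunc a₁ a₂ a₃) = a₁ ∧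
    coeff 5 (tateSeriesTrunc a₁ a₂ a₃) = a₂ + a₁ ^ 2 ∧
    coeff 6 (tateSeriesTrunc a₁ a₂ a₃) = a₃ + 2 * a₁ * a₂ + a₁ ^ 3 := by
  simp only [tateSeriesTrunc, LinearMap.map_add, coeff_X_pow, coeff_C_mul_X_pow]
  norm_num

theorem coeff_of_tateMap_eq {s : R⟦X⟧} (hs : X ∣ s) (hfix : tateMap a₁ a₂ a₃ a₄ a₆ s = s) :
    coeff 1 s = 0 ∧ coeff 2 s = 0 ∧ coeff 3 s = 1 ∧ coeff 4 s = a₁ ∧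
    coeff 5 s = a₂ + a₁ ^ 2 ∧ coeff 6 s = a₃ + 2 * a₁ * a₂ + a₁ ^ 3 := by
  have h7 : X ^ 7 ∣ s - tateSeriesTrunc a₁ a₂ a₃ :=
    (isXAdicContraction_tateMap a₁ a₂ a₃ a₄ a₆).X_pow_dvd_sub_of_apply_eq hs
      (X_dvd_tateSeriesTrunc a₁ a₂ a₃) hfix
      (X_pow_seven_dvd_tateMap_tateSeriesTrunc_sub a₁ a₂ a₃ a₄ a₆)
  have hcoeff (m : ℕ) (hm : m < 7) : coeff m s = coeff m (tateSeriesTrunc a₁ a₂ a₃) := by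
    rw [← sub_eq_zero, ← map_sub]
    exact X_pow_dvd_iff.mp h7 m hm
  simp (disch := norm_num) only [hcoeff]
  exact coeff_tateSeriesTrunc a₁ a₂ a₃

end Tate

end PowerSeries

theorem tateEq_iff {s : PowerSeries Rmu} :
    tateEq s ↔ PowerSeries.tateMap mu1 mu2 mu3 mu4 mu6 s = s :=
  eq_comm

/-- There is a unique power series `s(u)` with zero constant term satisfying the Tate
equation, and its coefficients at `u, u², u³, u⁴, u⁵, u⁶` are
`0, 0, 1, μ₁, μ₂ + μ₁², μ₃ + 2μ₁μ₂ + μ₁³`. -/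
theorem statement14 :
    (∃! s : PowerSeries Rmu, PowerSeries.constantCoeff s = 0 ∧ tateEq s) ∧
    ∀ s : PowerSeries Rmu, PowerSeries.constantCoeff s = 0 → tateEq s →
      PowerSeries.coeff 1 s = 0 ∧
      PowerSeries.coeff 2 s = 0 ∧
      PowerSeries.coeff 3 s = 1 ∧
      PowerSeries.coeff 4 s = mu1 ∧
      PowerSeries.coeff 5 s = mu2 + mu1 ^ 2 ∧
      PowerSeries.coeff 6 s = mu3 + 2 * mu1 * mu2 + mu1 ^ 3 := by
  simp only [tateEq_iff, ← PowerSeries.X_dvd_iff]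
  exact ⟨(PowerSeries.isXAdicContraction_tateMap mu1 mu2 mu3 mu4 mu6).existsUnique_apply_eq,
    fun s hs hfix ↦ PowerSeries.coeff_of_tateMap_eq mu1 mu2 mu3 mu4 mu6 hs hfix⟩

end
end
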